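/- For all y, z ∈ D: ⟨Ay, z⟩ − ⟨y, Az⟩ = (1 − e^{−2iδ})(Δy_{−1})conj(z_{−1}) − (1 − e^{2iδ}) y_{−1} conj(Δz_{−1}) − 2i sin(2δ) ∑_{n ≤ −1} [ (∇y_n)(conj(∇z_n)) + q_n y_n conj(z_n) ] + 2i sin(2δ) ∑_{n ≥ 2} [ (∇y_n)(conj(∇z_n)) + q_n y_n conj(z_n) ], where ∇y_n = y_n − y_{n−1} and for w ∈ D one sets w₁ = w_{−1}, w₀ = (1 − e^{2iδ}) w_{−1} + e^{2iδ} w₂. In particular, if δ = 0 then A is Hermitian on D, and if δ ≠ 0 then A is not Hermitian. -/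

import Mathlib

open ComplexConjugate

/-- The index set ℤ₀ = ℤ \ {0,1} as a subtype. -/
abbrev Z0 := {n : ℤ // n ≠ 0 ∧ n ≠ 1}

noncomputable def e2 (δ : ℝ) : ℂ := Complex.exp (2 * (δ : ℂ) * Complex.I)

/-- Extension of y : ℤ → ℂ by the auxiliary values y₁ = y_{−1} and
y₀ = (1 − e^{2iδ}) y_{−1} + e^{2iδ} y₂ coming from the impulse conditions. -/
noncomputable def ext (δ : ℝ) (y : ℤ → ℂ) : ℤ → ℂ := fun n =>
  if n = 0 then (1 - e2 δ) * y (-1) + e2 δ * y 2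
  else if n = 1 then y (-1)
  else y n

/-- (Ly)_n = −Δ²y_{n−1} + q_n y_n for n ∈ ℤ₀, using the auxiliary values. -/
noncomputable def Lop (δ : ℝ) (q : ℤ → ℝ) (y : ℤ → ℂ) (n : ℤ) : ℂ :=
  -(ext δ y (n + 1) - 2 * ext δ y n + ext δ y (n - 1)) + (q n : ℂ) * y n

/-- Membership in the domain D = { y ∈ l₀² : (qₙ yₙ) ∈ l₀² }. -/
def MemD (q : ℤ → ℝ) (y : ℤ → ℂ) : Prop :=
  Summable (fun n : Z0 => ‖y (n : ℤ)‖ ^ 2) ∧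
  Summable (fun n : Z0 => ‖(q (n : ℤ) : ℂ) * y (n : ℤ)‖ ^ 2)


/-- ρ_n = e^{2iδ} for n ≤ −1 and ρ_n = e^{−2iδ} for n ≥ 2 (value at n = 0, 1 immaterial). -/
noncomputable def rho (δ : ℝ) (n : ℤ) : ℂ :=
  if n ≤ -1 then e2 δ else Complex.exp (-(2 * (δ : ℂ)) * Complex.I)

/-- (Ay)_n = conj(ρ_n) (Ly)_n, i.e. A = M⁻¹L with (My)_n = ρ_n y_n (|ρ_n| = 1). -/
noncomputable def Aop (δ : ℝ) (q : ℤ → ℝ) (y : ℤ → ℂ) (n : ℤ) : ℂ :=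
  conj (rho δ n) * Lop δ q y n

/-!
On each half-line `n ≤ -1` and `n ≥ 2`, summation by parts (a discrete Green identity) turns
`∑ (Ly)ₙ conj zₙ` into the half-line Dirichlet form `∑ (∇yₙ) conj (∇zₙ) + qₙ yₙ conj zₙ` plus a
boundary term at the gap `{0, 1}`, where the auxiliary values `y₀, y₁` of `ext` enter. Weighting
the halves by `conj ρₙ` and writing `⟨y, Az⟩ = conj ⟨Az, y⟩`, the Dirichlet forms occur with
coefficients `±(e^{2iδ} - e^{-2iδ}) = ±2i sin 2δ`, and the boundary terms collapse to the stated
ones through `y₀ - y₋₁ = e^{2iδ} (y₂ - y₋₁)`. For `δ ≠ 0` the unit vectors `y = e₋₂`, `z = e₋₁`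
give `⟨Ay, z⟩ = -e^{-2iδ} ≠ -e^{2iδ} = ⟨y, Az⟩`.
-/

section SquareSummable

variable {ι : Type*}

theorem summable_mul_of_summable_sq {R : Type*} [NormedRing R] [CompleteSpace R] {f g : ι → R}
    (hf : Summable fun i => ‖f i‖ ^ 2) (hg : Summable fun i => ‖g i‖ ^ 2) :
    Summable fun i => f i * g i := by
  refine Summable.of_norm (((hf.add hg).div_const 2).of_nonneg_of_le (fun i => norm_nonneg _)
    fun i => ?_)
  nlinarith [norm_mul_le (f i) (g i), sq_nonneg (‖f i‖ - ‖g i‖)]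

theorem summable_sq_sub {E : Type*} [SeminormedAddCommGroup E] {f g : ι → E}
    (hf : Summable fun i => ‖f i‖ ^ 2) (hg : Summable fun i => ‖g i‖ ^ 2) :
    Summable fun i => ‖f i - g i‖ ^ 2 := by
  refine ((hf.add hg).mul_left 2).of_nonneg_of_le (fun i => by positivity) fun i => ?_
  nlinarith [norm_sub_le (f i) (g i), norm_nonneg (f i - g i), sq_nonneg (‖f i‖ - ‖g i‖)]

theorem summable_sq_succ_sub {E : Type*} [SeminormedAddCommGroup E] {u : ℕ → E}
    (hu : Summable fun k => ‖u k‖ ^ 2) : Summable fun k => ‖u (k + 1) - u k‖ ^ 2 :=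
  summable_sq_sub ((summable_nat_add_iff (f := fun k => ‖u k‖ ^ 2) 1).2 hu) hu

end SquareSummable

theorem hasSum_sub_succ {G : Type*} [AddCommGroup G] [TopologicalSpace G]
    [IsTopologicalAddGroup G] {Φ : ℕ → G} (h : Summable Φ) :
    HasSum (fun k => Φ k - Φ (k + 1)) (Φ 0) := by
  simpa using h.hasSum.sub ((hasSum_nat_add_iff' 1).2 h.hasSum)

section SummationByParts

variable {R : Type*} [NormedCommRing R] [CompleteSpace R] {u v : ℕ → R} (Q : ℕ → R)

/- Discrete Green identities for `-Δ² + Q` on `ℕ`, by summation by parts. -/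
theorem hasSum_schrodinger_mul (hu : Summable fun k => ‖u k‖ ^ 2)
    (hv : Summable fun k => ‖v k‖ ^ 2) (hQu : Summable fun k => ‖Q k * u (k + 1)‖ ^ 2) :
    HasSum (fun k => (-(u (k + 2) - 2 * u (k + 1) + u k) + Q k * u (k + 1)) * v (k + 1))
      (∑' k, ((u (k + 1) - u k) * (v (k + 1) - v k) + Q k * u (k + 1) * v (k + 1)) +
        (u 1 - u 0) * v 0) := by
  have hdu := summable_sq_succ_sub hu
  have hP := summable_mul_of_summable_sq hQu
    ((summable_nat_add_iff (f := fun k => ‖v k‖ ^ 2) 1).2 hv)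
  convert ((summable_mul_of_summable_sq hdu (summable_sq_succ_sub hv)).add hP).hasSum.add
    (hasSum_sub_succ (summable_mul_of_summable_sq hdu hv)) using 1
  funext k
  ring

theorem hasSum_schrodinger_mul' (hu : Summable fun k => ‖u k‖ ^ 2)
    (hv : Summable fun k => ‖v k‖ ^ 2) (hQu : Summable fun k => ‖Q k * u (k + 1)‖ ^ 2) :
    HasSum (fun k => (-(u (k + 2) - 2 * u (k + 1) + u k) + Q k * u (k + 1)) * v (k + 1))
      (∑' k, ((u (k + 2) - u (k + 1)) * (v (k + 2) - v (k + 1)) + Q k * u (k + 1) * v (k + 1)) +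
        (u 1 - u 0) * v 1) := by
  have hdu := summable_sq_succ_sub hu
  have hv' := (summable_nat_add_iff (f := fun k => ‖v k‖ ^ 2) 1).2 hv
  have hD : Summable fun k => (u (k + 2) - u (k + 1)) * (v (k + 2) - v (k + 1)) :=
    (summable_nat_add_iff (f := fun k => (u (k + 1) - u k) * (v (k + 1) - v k)) 1).2
      (summable_mul_of_summable_sq hdu (summable_sq_succ_sub hv))
  convert (hD.add (summable_mul_of_summable_sq hQu hv')).hasSum.add
    (hasSum_sub_succ (summable_mul_of_summable_sq hdu hv')) using 1
  funext k
  ring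

end SummationByParts

def natEquivIci (a : ℤ) : ℕ ≃ {m : ℤ // a ≤ m} where
  toFun k := ⟨a + k, by omega⟩
  invFun n := (n.1 - a).toNat
  left_inv k := by simp
  right_inv n := Subtype.ext (by simp; omega)

def natEquivIic (a : ℤ) : ℕ ≃ {m : ℤ // m ≤ a} where
  toFun k := ⟨a - k, by omega⟩
  invFun n := (a - n.1).toNat
  left_inv k := by simp
  right_inv n := Subtype.ext (by simp; omega)

theorem summable_comp_two_add {F : ℤ → ℝ} (h : Summable fun n : Z0 => F n) :
    Summable fun k : ℕ => F (2 + k) :=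
  h.comp_injective (i := fun k : ℕ => (⟨2 + k, by omega⟩ : Z0)) fun a b hab => by simpa using hab

theorem summable_comp_neg_one_sub {F : ℤ → ℝ} (h : Summable fun n : Z0 => F n) :
    Summable fun k : ℕ => F (-1 - k) :=
  h.comp_injective (i := fun k : ℕ => (⟨-1 - k, by omega⟩ : Z0)) fun a b hab => by simpa using hab

theorem hasSum_Z0 {M : Type*} [AddCommMonoid M] [TopologicalSpace M] [ContinuousAdd M]
    {f : ℤ → M} {a b : M} (ha : HasSum (fun n : {m : ℤ // m ≤ -1} => f n) a)
    (hb : HasSum (fun n : {m : ℤ // 2 ≤ m} => f n) b) : HasSum (fun n : Z0 => f n) (a + b) := by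
  have h := HasSum.add_disjoint (s := Set.Iic (-1)) (t := Set.Ici 2)
    (Set.Iic_disjoint_Ici.2 (by norm_num)) ha hb
  exact (Equiv.subtypeEquivRight (q := (· ∈ Set.Iic (-1) ∪ Set.Ici 2))
    fun n => by simp; omega).hasSum_iff.2 h

theorem conj_e2 (δ : ℝ) : conj (e2 δ) = Complex.exp (-(2 * (δ : ℂ)) * Complex.I) := by
  rw [e2, ← Complex.exp_conj]
  congr 1
  simp only [map_mul, map_ofNat, Complex.conj_ofReal, Complex.conj_I]
  ring

theorem e2_sub_conj (δ : ℝ) : e2 δ - conj (e2 δ) = 2 * Complex.I * (Real.sin (2 * δ) : ℂ) := by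
  rw [Complex.sub_conj, e2,
    show 2 * (δ : ℂ) * Complex.I = ((2 * δ : ℝ) : ℂ) * Complex.I by push_cast; ring,
    Complex.exp_ofReal_mul_I_im]
  push_cast
  ring

theorem rho_of_le_neg_one {δ : ℝ} {n : ℤ} (h : n ≤ -1) : rho δ n = e2 δ := if_pos h

theorem rho_of_two_le {δ : ℝ} {n : ℤ} (h : 2 ≤ n) : rho δ n = conj (e2 δ) := by
  rw [rho, if_neg (by omega), conj_e2]

theorem ext_of_ne {δ : ℝ} {y : ℤ → ℂ} {n : ℤ} (h0 : n ≠ 0) (h1 : n ≠ 1) : ext δ y n = y n := by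
  simp [ext, h0, h1]

theorem ext_zero_sub (δ : ℝ) (y : ℤ → ℂ) : ext δ y 0 - y (-1) = e2 δ * (y 2 - y (-1)) := by
  simp only [ext, if_pos]
  ring

noncomputable def dirichletFormNeg (q : ℤ → ℝ) (y z : ℤ → ℂ) : ℂ :=
  ∑' n : {m : ℤ // m ≤ -1},
    ((y (n : ℤ) - y ((n : ℤ) - 1)) * conj (z (n : ℤ) - z ((n : ℤ) - 1)) +
      (q (n : ℤ) : ℂ) * y (n : ℤ) * conj (z (n : ℤ)))

noncomputable def dirichletFormPos (δ : ℝ) (q : ℤ → ℝ) (y z : ℤ → ℂ) : ℂ :=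
  ∑' n : {m : ℤ // 2 ≤ m},
    ((ext δ y (n : ℤ) - ext δ y ((n : ℤ) - 1)) * conj (ext δ z (n : ℤ) - ext δ z ((n : ℤ) - 1)) +
      (q (n : ℤ) : ℂ) * y (n : ℤ) * conj (z (n : ℤ)))

theorem conj_dirichletFormNeg (q : ℤ → ℝ) (y z : ℤ → ℂ) :
    conj (dirichletFormNeg q z y) = dirichletFormNeg q y z := by
  rw [dirichletFormNeg, dirichletFormNeg, Complex.conj_tsum]
  refine tsum_congr fun n => ?_
  simp only [map_add, map_mul, Complex.conj_conj, Complex.conj_ofReal]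
  ring

theorem conj_dirichletFormPos (δ : ℝ) (q : ℤ → ℝ) (y z : ℤ → ℂ) :
    conj (dirichletFormPos δ q z y) = dirichletFormPos δ q y z := by
  rw [dirichletFormPos, dirichletFormPos, Complex.conj_tsum]
  refine tsum_congr fun n => ?_
  simp only [map_add, map_mul, Complex.conj_conj, Complex.conj_ofReal]
  ring

section Green

variable {δ : ℝ} {q : ℤ → ℝ} {y z : ℤ → ℂ}

theorem summable_sq_ext_one_add (hy : Summable fun n : Z0 => ‖y n‖ ^ 2) :
    Summable fun k : ℕ => ‖ext δ y (1 + k)‖ ^ 2 := by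
  have h : Summable fun k : ℕ => ‖y (2 + k)‖ ^ 2 :=
    summable_comp_two_add (F := fun n => ‖y n‖ ^ 2) hy
  refine (summable_nat_add_iff (f := fun k : ℕ => ‖ext δ y (1 + k)‖ ^ 2) 1).1 (h.congr fun k => ?_)
  rw [ext_of_ne (by omega) (by omega)]
  push_cast
  ring_nf

theorem summable_sq_ext_neg (hy : Summable fun n : Z0 => ‖y n‖ ^ 2) :
    Summable fun k : ℕ => ‖ext δ y (-k)‖ ^ 2 := by
  have h : Summable fun k : ℕ => ‖y (-1 - k)‖ ^ 2 :=
    summable_comp_neg_one_sub (F := fun n => ‖y n‖ ^ 2) hy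
  refine (summable_nat_add_iff (f := fun k : ℕ => ‖ext δ y (-k)‖ ^ 2) 1).1 (h.congr fun k => ?_)
  rw [ext_of_ne (by omega) (by omega)]
  push_cast
  ring_nf

theorem hasSum_Lop_mul_conj_neg (hy : MemD q y) (hz : Summable fun n : Z0 => ‖z n‖ ^ 2) :
    HasSum (fun n : {m : ℤ // m ≤ -1} => Lop δ q y n * conj (z n))
      (dirichletFormNeg q y z - (ext δ y 0 - y (-1)) * conj (z (-1))) := by
  have hv : Summable fun k : ℕ => ‖conj (ext δ z (-k))‖ ^ 2 := by
    simpa only [Complex.norm_conj] using summable_sq_ext_neg (δ := δ) hz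
  have hQu : Summable fun k : ℕ => ‖(q (-1 - k) : ℂ) * ext δ y (-(k + 1 : ℕ))‖ ^ 2 := by
    refine (summable_comp_neg_one_sub (F := fun n => ‖(q n : ℂ) * y n‖ ^ 2) hy.2).congr
      fun k => ?_
    rw [ext_of_ne (by omega) (by omega)]
    push_cast
    ring_nf
  have key := hasSum_schrodinger_mul' _ (summable_sq_ext_neg (δ := δ) hy.1) hv hQu
  rw [← (natEquivIic (-1)).hasSum_iff, dirichletFormNeg, ← (natEquivIic (-1)).tsum_eq]
  convert key using 1
  · rfl
  · funext k
    simp (disch := omega) only [natEquivIic, Function.comp, Equiv.coe_fn_mk, Lop, ext_of_ne,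
      Nat.cast_add, Nat.cast_one, Nat.cast_ofNat]
    ring_nf
  · rw [sub_eq_add_neg, ← neg_mul, neg_sub]
    congr 1
    exact tsum_congr fun k => by
      simp (disch := omega) only [natEquivIic, Equiv.coe_fn_mk, ext_of_ne, map_sub, Nat.cast_add,
        Nat.cast_one]
      ring_nf

theorem hasSum_Lop_mul_conj_pos (hy : MemD q y) (hz : Summable fun n : Z0 => ‖z n‖ ^ 2) :
    HasSum (fun n : {m : ℤ // 2 ≤ m} => Lop δ q y n * conj (z n))
      (dirichletFormPos δ q y z + (y 2 - y (-1)) * conj (z (-1))) := by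
  have hv : Summable fun k : ℕ => ‖conj (ext δ z (1 + k))‖ ^ 2 := by
    simpa only [Complex.norm_conj] using summable_sq_ext_one_add (δ := δ) hz
  have hQu : Summable fun k : ℕ => ‖(q (2 + k) : ℂ) * ext δ y (1 + (k + 1 : ℕ))‖ ^ 2 := by
    refine (summable_comp_two_add (F := fun n => ‖(q n : ℂ) * y n‖ ^ 2) hy.2).congr fun k => ?_
    rw [ext_of_ne (by omega) (by omega)]
    push_cast
    ring_nf
  have key := hasSum_schrodinger_mul _ (summable_sq_ext_one_add (δ := δ) hy.1) hv hQu
  rw [← (natEquivIci 2).hasSum_iff, dirichletFormPos, ← (natEquivIci 2).tsum_eq]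
  convert key using 1
  · rfl
  · funext k
    simp (disch := omega) only [natEquivIci, Function.comp, Equiv.coe_fn_mk, Lop, ext_of_ne,
      Nat.cast_add, Nat.cast_one, Nat.cast_ofNat]
    ring_nf
  · congr 1
    exact tsum_congr fun k => by
      simp (disch := omega) only [natEquivIci, Equiv.coe_fn_mk, ext_of_ne, map_sub, Nat.cast_add,
        Nat.cast_one]
      ring_nf

theorem hasSum_Aop_mul_conj (hy : MemD q y) (hz : Summable fun n : Z0 => ‖z n‖ ^ 2) :
    HasSum (fun n : Z0 => Aop δ q y n * conj (z n))
      (conj (e2 δ) * (dirichletFormNeg q y z - (ext δ y 0 - y (-1)) * conj (z (-1))) +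
        e2 δ * (dirichletFormPos δ q y z + (y 2 - y (-1)) * conj (z (-1)))) := by
  refine hasSum_Z0 (f := fun n => Aop δ q y n * conj (z n))
    (((hasSum_Lop_mul_conj_neg hy hz).mul_left _).congr_fun fun n => ?_)
    (((hasSum_Lop_mul_conj_pos hy hz).mul_left _).congr_fun fun n => ?_)
  · rw [Aop, rho_of_le_neg_one n.2, mul_assoc]
  · rw [Aop, rho_of_two_le n.2, Complex.conj_conj, mul_assoc]

theorem tsum_mul_conj_Aop (hy : Summable fun n : Z0 => ‖y n‖ ^ 2) (hz : MemD q z) :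
    ∑' n : Z0, y n * conj (Aop δ q z n) =
      e2 δ * (dirichletFormNeg q y z - y (-1) * conj (ext δ z 0 - z (-1))) +
        conj (e2 δ) * (dirichletFormPos δ q y z + y (-1) * conj (z 2 - z (-1))) := by
  have h := Complex.hasSum_conj'.2 (hasSum_Aop_mul_conj (δ := δ) hz hy)
  refine (h.congr_fun fun n => ?_).tsum_eq.trans ?_
  · rw [map_mul, Complex.conj_conj, mul_comm]
  · rw [← conj_dirichletFormNeg, ← conj_dirichletFormPos]
    simp only [map_add, map_mul, map_sub, Complex.conj_conj]
    ring

theorem inner_Aop_sub_inner_Aop (hy : MemD q y) (hz : MemD q z) :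
    (∑' n : Z0, Aop δ q y n * conj (z n)) - ∑' n : Z0, y n * conj (Aop δ q z n) =
      (1 - Complex.exp (-(2 * (δ : ℂ)) * Complex.I)) * (ext δ y 0 - y (-1)) * conj (z (-1)) -
        (1 - e2 δ) * y (-1) * conj (ext δ z 0 - z (-1)) -
        2 * Complex.I * (Real.sin (2 * δ) : ℂ) * dirichletFormNeg q y z +
        2 * Complex.I * (Real.sin (2 * δ) : ℂ) * dirichletFormPos δ q y z := by
  have hz0 : conj (ext δ z 0 - z (-1)) = conj (e2 δ) * conj (z 2 - z (-1)) := by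
    rw [ext_zero_sub, map_mul]
  rw [(hasSum_Aop_mul_conj hy hz.1).tsum_eq, tsum_mul_conj_Aop hy.1 hz, ← conj_e2, ← e2_sub_conj]
  linear_combination -conj (z (-1)) * ext_zero_sub δ y + y (-1) * hz0

end Green

theorem memD_single (q : ℤ → ℝ) (a : ℤ) (c : ℂ) : MemD q (Pi.single a c) := by
  have hfin : (Subtype.val ⁻¹' {a} : Set Z0).Finite :=
    (Set.finite_singleton a).preimage Subtype.val_injective.injOn
  constructor <;> refine summable_of_hasFiniteSupport (hfin.subset fun n hn => ?_) <;>
    by_contra h <;> simp_all [Pi.single_apply]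

theorem exists_tsum_Aop_mul_conj_ne (q : ℤ → ℝ) {δ : ℝ} (hδ : e2 δ ≠ conj (e2 δ)) :
    ∃ y z : ℤ → ℂ, MemD q y ∧ MemD q z ∧
      (∑' n : Z0, Aop δ q y n * conj (z n)) ≠ ∑' n : Z0, y n * conj (Aop δ q z n) := by
  refine ⟨Pi.single (-2) 1, Pi.single (-1) 1, memD_single _ _ _, memD_single _ _ _, ?_⟩
  rw [tsum_eq_single ⟨-1, by norm_num⟩ fun n hn => ?_,
    tsum_eq_single ⟨-2, by norm_num⟩ fun n hn => ?_]
  · simpa [Aop, Lop, rho, ext] using hδ.symm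
  · rw [Pi.single_eq_of_ne (Subtype.coe_ne_coe.2 hn), zero_mul]
  · rw [Pi.single_eq_of_ne (Subtype.coe_ne_coe.2 hn), map_zero, mul_zero]

/-- for all y, z ∈ D,
⟨Ay, z⟩ − ⟨y, Az⟩ = (1 − e^{−2iδ})(Δy_{−1}) conj(z_{−1}) − (1 − e^{2iδ}) y_{−1} conj(Δz_{−1})
 − 2i sin 2δ ∑_{n ≤ −1} [(∇y_n) conj(∇z_n) + q_n y_n conj(z_n)]
 + 2i sin 2δ ∑_{n ≥ 2} [(∇y_n) conj(∇z_n) + q_n y_n conj(z_n)];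
in particular A is Hermitian if δ = 0, and not Hermitian if δ ≠ 0. -/
theorem A_nonhermitian_formula (δ : ℝ) (hδ : 0 ≤ δ ∧ δ < Real.pi / 2) (q : ℤ → ℝ) :
    (∀ y z : ℤ → ℂ, MemD q y → MemD q z →
      ((∑' n : Z0, Aop δ q y (n : ℤ) * conj (z (n : ℤ))) -
          ∑' n : Z0, y (n : ℤ) * conj (Aop δ q z (n : ℤ))) =
        (1 - Complex.exp (-(2 * (δ : ℂ)) * Complex.I)) * (ext δ y 0 - y (-1)) * conj (z (-1)) -
          (1 - e2 δ) * y (-1) * conj (ext δ z 0 - z (-1)) -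
          2 * Complex.I * (Real.sin (2 * δ) : ℂ) *
            (∑' n : {m : ℤ // m ≤ -1},
              ((y (n : ℤ) - y ((n : ℤ) - 1)) * conj (z (n : ℤ) - z ((n : ℤ) - 1)) +
                (q (n : ℤ) : ℂ) * y (n : ℤ) * conj (z (n : ℤ)))) +
          2 * Complex.I * (Real.sin (2 * δ) : ℂ) *
            (∑' n : {m : ℤ // 2 ≤ m},
              ((ext δ y (n : ℤ) - ext δ y ((n : ℤ) - 1)) *
                  conj (ext δ z (n : ℤ) - ext δ z ((n : ℤ) - 1)) +
                (q (n : ℤ) : ℂ) * y (n : ℤ) * conj (z (n : ℤ))))) ∧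
    (δ = 0 → ∀ y z : ℤ → ℂ, MemD q y → MemD q z →
      (∑' n : Z0, Aop δ q y (n : ℤ) * conj (z (n : ℤ))) =
        ∑' n : Z0, y (n : ℤ) * conj (Aop δ q z (n : ℤ))) ∧
    (δ ≠ 0 → ∃ y z : ℤ → ℂ, MemD q y ∧ MemD q z ∧
      (∑' n : Z0, Aop δ q y (n : ℤ) * conj (z (n : ℤ))) ≠
        ∑' n : Z0, y (n : ℤ) * conj (Aop δ q z (n : ℤ))) := by
  refine ⟨fun y z hy hz => inner_Aop_sub_inner_Aop hy hz, ?_, fun hδ0 => ?_⟩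
  · rintro rfl y z hy hz
    refine sub_eq_zero.1 ((inner_Aop_sub_inner_Aop hy hz).trans ?_)
    simp [e2]
  · refine exists_tsum_Aop_mul_conj_ne q fun h => ?_
    have hsin : (Real.sin (2 * δ) : ℂ) = 0 := by
      simpa [sub_eq_zero.2 h, Complex.I_ne_zero] using (e2_sub_conj δ).symm
    have hδpos : 0 < δ := lt_of_le_of_ne hδ.1 (Ne.symm hδ0)
    exact (Real.sin_pos_of_pos_of_lt_pi (by linarith) (by linarith)).ne' (Complex.ofReal_eq_zero.1 hsin)
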